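/- Assume a : ℕ × ℕ → ℚ satisfies the Weierstrass recursion and that every a(i,j) is an integer. If the divisibility hypothesis holds for the prime 3, namely a(i,j) ≠ 0 and ν₃(a(i,j)) = j + ν₃(b(i,j)) for all i, j ∈ ℕ (where b(i,j) = (4i+6j+1)!/(2^(3i+4j)·3^(i+2j)·i!·j!) and ν₃(b(i,j)) = ν₃((4i+6j+1)!) − ν₃(i!) − ν₃(j!) − i − 2j), then for all i, j ∈ ℕ the integer 3^j divides a(i,j). -/

import Mathlib

/-!
Since `3 ^ n * n !` divides `(3 * n)!`, the multinomial divisibility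
`(3i)! (3j)! (3j)! ∣ (3i + 6j)!` shows that `3 ^ (i + 2j) * i ! * j !` divides
`(4i + 6j + 1)!`. Hence the `3`-adic valuation of `b(i,j)` is nonnegative, and the
hypothesis gives `ν₃(a(i,j)) ≥ j`.
-/

open Nat

/-- Extension of `a : ℕ × ℕ → ℚ` to integer indices, taken to be `0`
whenever either index is negative. -/
def wext (a : ℕ × ℕ → ℚ) (k l : ℤ) : ℚ :=
  if 0 ≤ k ∧ 0 ≤ l then a (k.toNat, l.toNat) else 0

/-- `a : ℕ × ℕ → ℚ` satisfies the Weierstrass recursion: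
`a(0,0) = 1` and for `(i,j) ≠ (0,0)`,
`a(i,j) = 3(i+1)·a(i+1,j−1) + (16/3)(j+1)·a(i−2,j+1) − (1/3)(4i+6j−1)(2i+3j−1)·a(i−1,j)`,
where terms with a negative index vanish. -/
def WeierstrassRec (a : ℕ × ℕ → ℚ) : Prop :=
  a (0, 0) = 1 ∧
  ∀ i j : ℕ, (i, j) ≠ (0, 0) →
    a (i, j) =
      3 * ((i : ℚ) + 1) * wext a ((i : ℤ) + 1) ((j : ℤ) - 1)
      + (16 / 3) * ((j : ℚ) + 1) * wext a ((i : ℤ) - 2) ((j : ℤ) + 1)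
      - (1 / 3) * (4 * (i : ℚ) + 6 * (j : ℚ) - 1) * (2 * (i : ℚ) + 3 * (j : ℚ) - 1)
          * wext a ((i : ℤ) - 1) (j : ℤ)

theorem Nat.pow_mul_factorial_dvd_factorial_mul {p : ℕ} (hp : 0 < p) (n : ℕ) :
    p ^ n * n ! ∣ (p * n)! := by
  induction n with
  | zero => simp
  | succ n ih =>
    have hle : p * n ≤ p * (n + 1) - 1 := by rw [mul_add_one]; omega
    calc p ^ (n + 1) * (n + 1)! = p ^ n * n ! * (p * (n + 1)) := by
          rw [pow_succ, factorial_succ]; ring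
      _ ∣ (p * (n + 1) - 1)! * (p * (n + 1)) :=
          mul_dvd_mul_right (ih.trans (factorial_dvd_factorial hle)) _
      _ = (p * (n + 1))! := by rw [mul_comm, mul_factorial_pred (by positivity)]

theorem three_pow_mul_factorial_mul_factorial_dvd (i j : ℕ) :
    3 ^ (i + 2 * j) * i ! * j ! ∣ (4 * i + 6 * j + 1)! := by
  have h3i := pow_mul_factorial_dvd_factorial_mul (p := 3) (by norm_num) i
  have h3j := pow_mul_factorial_dvd_factorial_mul (p := 3) (by norm_num) j
  calc 3 ^ (i + 2 * j) * i ! * j ! ∣ 3 ^ i * i ! * (3 ^ j * j !) * (3 ^ j * j !) :=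
        Dvd.intro (j !) (by ring)
    _ ∣ (3 * i)! * (3 * j)! * (3 * j)! := mul_dvd_mul (mul_dvd_mul h3i h3j) h3j
    _ ∣ (3 * i + 3 * j)! * (3 * j)! :=
        mul_dvd_mul_right (factorial_mul_factorial_dvd_factorial_add _ _) _
    _ ∣ (3 * i + 3 * j + 3 * j)! := factorial_mul_factorial_dvd_factorial_add _ _
    _ ∣ (4 * i + 6 * j + 1)! := factorial_dvd_factorial (by omega)

theorem padicValNat_le_of_dvd {p a b : ℕ} [Fact p.Prime] (hb : b ≠ 0) (h : a ∣ b) :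
    padicValNat p a ≤ padicValNat p b :=
  (padicValNat_dvd_iff_le hb).mp (pow_padicValNat_dvd.trans h)

theorem exists_eq_pow_mul_of_le_padicValRat {p n : ℕ} [Fact p.Prime] {m : ℤ}
    (h : (n : ℤ) ≤ padicValRat p m) : ∃ k : ℤ, (m : ℚ) = (p : ℚ) ^ n * k := by
  rw [padicValRat.of_int] at h
  obtain ⟨k, rfl⟩ := (padicValInt_dvd_iff n m).mpr (Or.inr (by exact_mod_cast h))
  exact ⟨k, by push_cast; ring⟩

theorem three_pow_dvd_of_hypothesis_general (a : ℕ × ℕ → ℚ)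
    (hint : ∀ i j : ℕ, ∃ m : ℤ, a (i, j) = (m : ℚ))
    (hhyp : ∀ i j : ℕ, a (i, j) ≠ 0 ∧
      padicValRat 3 (a (i, j)) =
        (j : ℤ) + ((padicValNat 3 ((4 * i + 6 * j + 1)!) : ℤ)
          - (padicValNat 3 (i !) : ℤ) - (padicValNat 3 (j !) : ℤ) - (i : ℤ) - 2 * (j : ℤ))) :
    ∀ i j : ℕ, ∃ m : ℤ, a (i, j) = ((3 : ℚ) ^ j) * (m : ℚ) := by
  intro i j
  obtain ⟨m, hm⟩ := hint i j
  have hval := (hhyp i j).2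
  have hden : i + 2 * j + padicValNat 3 (i !) + padicValNat 3 (j !) ≤
      padicValNat 3 ((4 * i + 6 * j + 1)!) := by
    have := padicValNat_le_of_dvd (p := 3) (factorial_ne_zero _)
      (three_pow_mul_factorial_mul_factorial_dvd i j)
    rwa [padicValNat.mul (by positivity) (factorial_ne_zero j),
      padicValNat.mul (by positivity) (factorial_ne_zero i), padicValNat.prime_pow] at this
  rw [hm] at hval ⊢
  exact_mod_cast exists_eq_pow_mul_of_le_padicValRat (p := 3) (by omega)

/-- If the divisibility hypothesis holds for the prime 3, then `3^j ∣ a(i,j)`. -/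
theorem three_pow_dvd_of_hypothesis (a : ℕ × ℕ → ℚ) (ha : WeierstrassRec a)
    (hint : ∀ i j : ℕ, ∃ m : ℤ, a (i, j) = (m : ℚ))
    (hhyp : ∀ i j : ℕ, a (i, j) ≠ 0 ∧
      padicValRat 3 (a (i, j)) =
        (j : ℤ) + ((padicValNat 3 ((4 * i + 6 * j + 1)!) : ℤ)
          - (padicValNat 3 (i !) : ℤ) - (padicValNat 3 (j !) : ℤ) - (i : ℤ) - 2 * (j : ℤ))) :
    ∀ i j : ℕ, ∃ m : ℤ, a (i, j) = ((3 : ℚ) ^ j) * (m : ℚ) :=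
  three_pow_dvd_of_hypothesis_general a hint hhyp
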